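/- arXiv:1201.2958 — 5 statements merged into one kernel-verified Lean document; each statement's English description precedes it below -/
import Mathlib

section
/- Let T be the linear operator on ℝ^{2k} given by the real Jordan block J*_{ζ,k} for ζ = a + bi with b > 0. Then a subspace W ⊆ ℝ^{2k} is T-invariant if and only if W = ker((T − D)^r) for some 0 ≤ r ≤ k, where D = diag(C,…,C) with C = [[a,−b],[b,a]]. In particular ℝ^{2k} has exactly k+1 T-invariant subspaces. -/
def exv {m : ℕ} (x : Fin m → ℝ) (n : ℕ) : ℝ :=
  if h : n < m then x ⟨n, h⟩ else 0

lemma exv_add {m} (x y : Fin m → ℝ) (n) : exv (x + y) n = exv x n + exv y n := by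
  unfold exv; split <;> simp

lemma exv_sub {m} (x y : Fin m → ℝ) (n) : exv (x - y) n = exv x n - exv y n := by
  unfold exv; split <;> simp

lemma exv_smul {m} (c : ℝ) (x : Fin m → ℝ) (n) : exv (c • x) n = c * exv x n := by
  unfold exv; split <;> simp

lemma exv_zero {m} (n) : exv (0 : Fin m → ℝ) n = 0 := by
  unfold exv; split <;> simp

lemma exv_coe {m} (x : Fin m → ℝ) (i : Fin m) : exv x (i : ℕ) = x i := by
  simp [exv]

lemma exv_zero_of_le {m : ℕ} (x : Fin m → ℝ) {n : ℕ} (h : m ≤ n) : exv x n = 0 :=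
  dif_neg (by omega)

def Kr (k r : ℕ) : Submodule ℝ (Fin (2*k) → ℝ) where
  carrier := {x | ∀ n, 2*r ≤ n → exv x n = 0}
  add_mem' hx hy n hn := by rw [exv_add, hx n hn, hy n hn]; ring
  zero_mem' n hn := exv_zero n
  smul_mem' c x hx n hn := by rw [exv_smul, hx n hn]; ring

lemma mem_Kr {k r : ℕ} (x : Fin (2*k) → ℝ) : x ∈ Kr k r ↔ ∀ n, 2*r ≤ n → exv x n = 0 := Iff.rfl

lemma sum_ite_val {m : ℕ} (n' : ℕ) (c : ℝ) (x : Fin m → ℝ) :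
    ∑ j : Fin m, (if n' = (j:ℕ) then c * x j else 0) = c * exv x n' := by
  by_cases h : n' < m
  · rw [Finset.sum_eq_single ⟨n', h⟩]
    · simp [exv, h]
    · intro j _ hj
      rw [if_neg]
      intro hc
      exact hj (Fin.ext (by simp [← hc]))
    · simp
  · rw [Finset.sum_eq_zero, exv, dif_neg h, mul_zero]
    intro j _
    rw [if_neg]
    have := j.isLt
    omega

lemma master {k : ℕ} (a b t : ℝ) (M : Matrix (Fin (2*k)) (Fin (2*k)) ℝ)
    (hM : ∀ i j : Fin (2*k), M i j =
      if i = j then a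
      else if (i : ℕ) / 2 = (j : ℕ) / 2 then
        (if (i : ℕ) + 1 = (j : ℕ) then -b else b)
      else if (j : ℕ) = (i : ℕ) + 2 then t else 0)
    (x : Fin (2*k) → ℝ) (n : ℕ) :
    exv (Matrix.toLin' M x) n =
      a * exv x n + (if n % 2 = 0 then -b * exv x (n+1) else b * exv x (n-1))
        + t * exv x (n+2) := by
  by_cases hn : n < 2*k
  · obtain ⟨i, hi⟩ : ∃ i : Fin (2*k), (i : ℕ) = n := ⟨⟨n, hn⟩, rfl⟩
    have hL : exv (Matrix.toLin' M x) n = ∑ j, M i j * x j := by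
      rw [exv, dif_pos hn]
      have h2 : (⟨n, hn⟩ : Fin (2*k)) = i := Fin.ext (by simp [hi])
      rw [h2, Matrix.toLin'_apply]
      simp [Matrix.mulVec, dotProduct]
    rcases Nat.even_or_odd n with hpar | hpar
    · have hpar : n % 2 = 0 := Nat.even_iff.mp hpar
      have key : ∀ j : Fin (2*k), M i j * x j =
          (if n = (j:ℕ) then a * x j else 0) +
          ((if n+1 = (j:ℕ) then -b * x j else 0) + (if n+2 = (j:ℕ) then t * x j else 0)) := by
        intro j
        have hj := j.isLt
        rw [hM i j]
        simp only [Fin.ext_iff]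
        split_ifs <;> first | ring1 | (exfalso; omega)
      rw [hL, Finset.sum_congr rfl (fun j _ => key j), Finset.sum_add_distrib,
        Finset.sum_add_distrib, sum_ite_val, sum_ite_val, sum_ite_val, if_pos hpar]
      ring
    · have hpar : n % 2 = 1 := Nat.odd_iff.mp hpar
      have key : ∀ j : Fin (2*k), M i j * x j =
          (if n = (j:ℕ) then a * x j else 0) +
          ((if n-1 = (j:ℕ) then b * x j else 0) + (if n+2 = (j:ℕ) then t * x j else 0)) := by
        intro j
        have hj := j.isLt
        rw [hM i j]
        simp only [Fin.ext_iff]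
        split_ifs <;> first | ring1 | (exfalso; omega)
      rw [hL, Finset.sum_congr rfl (fun j _ => key j), Finset.sum_add_distrib,
        Finset.sum_add_distrib, sum_ite_val, sum_ite_val, sum_ite_val, if_neg (by omega)]
      ring
  · rw [exv_zero_of_le _ (by omega : 2*k ≤ n), exv_zero_of_le x (by omega : 2*k ≤ n),
      exv_zero_of_le x (by omega : 2*k ≤ n + 2)]
    rcases Nat.even_or_odd n with hpar | hpar
    · have hpar : n % 2 = 0 := Nat.even_iff.mp hpar
      rw [if_pos hpar, exv_zero_of_le x (by omega : 2*k ≤ n + 1)]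
      ring
    · have hpar : n % 2 = 1 := Nat.odd_iff.mp hpar
      rw [if_neg (by omega), exv_zero_of_le x (by omega : 2*k ≤ n - 1)]
      ring

section Main

variable {k : ℕ} {a b : ℝ} (hb : 0 < b)
  {J D : Matrix (Fin (2 * k)) (Fin (2 * k)) ℝ}
  {T : Module.End ℝ (Fin (2 * k) → ℝ)}

-- coordinate formula for T
lemma exv_T
    (hJ : ∀ i j : Fin (2 * k), J i j =
      if i = j then a
      else if (i : ℕ) / 2 = (j : ℕ) / 2 then
        (if (i : ℕ) + 1 = (j : ℕ) then -b else b)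
      else if (j : ℕ) = (i : ℕ) + 2 then 1 else 0)
    (hT : T = Matrix.toLin' J) (x : Fin (2 * k) → ℝ) (n : ℕ) :
    exv (T x) n = a * exv x n +
      (if n % 2 = 0 then -b * exv x (n+1) else b * exv x (n-1)) + exv x (n+2) := by
  rw [hT]
  have := master a b 1 J (by intro i j; rw [hJ i j]) x n
  rw [this]; ring

lemma exv_D
    (hD : ∀ i j : Fin (2 * k), D i j =
      if i = j then a
      else if (i : ℕ) / 2 = (j : ℕ) / 2 then
        (if (i : ℕ) + 1 = (j : ℕ) then -b else b)
      else 0)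
    (x : Fin (2 * k) → ℝ) (n : ℕ) :
    exv (Matrix.toLin' D x) n = a * exv x n +
      (if n % 2 = 0 then -b * exv x (n+1) else b * exv x (n-1)) := by
  have hD' : ∀ i j : Fin (2 * k), D i j =
      if i = j then a
      else if (i : ℕ) / 2 = (j : ℕ) / 2 then
        (if (i : ℕ) + 1 = (j : ℕ) then -b else b)
      else if (j : ℕ) = (i : ℕ) + 2 then 0 else 0 := by
    intro i j; rw [hD i j]; split_ifs <;> rfl
  have := master a b 0 D hD' x n
  rw [this]; ring

variable (hJ : ∀ i j : Fin (2 * k), J i j =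
      if i = j then a
      else if (i : ℕ) / 2 = (j : ℕ) / 2 then
        (if (i : ℕ) + 1 = (j : ℕ) then -b else b)
      else if (j : ℕ) = (i : ℕ) + 2 then 1 else 0)
  (hD : ∀ i j : Fin (2 * k), D i j =
      if i = j then a
      else if (i : ℕ) / 2 = (j : ℕ) / 2 then
        (if (i : ℕ) + 1 = (j : ℕ) then -b else b)
      else 0)
  (hT : T = Matrix.toLin' J)

include hJ hD hT

lemma exv_N (x : Fin (2 * k) → ℝ) (n : ℕ) :
    exv ((T - Matrix.toLin' D) x) n = exv x (n + 2) := by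
  rw [LinearMap.sub_apply, exv_sub, exv_T hJ hT, exv_D hD]
  ring

lemma exv_Npow (r : ℕ) (x : Fin (2 * k) → ℝ) (n : ℕ) :
    exv (((T - Matrix.toLin' D) ^ r) x) n = exv x (n + 2 * r) := by
  induction r generalizing x n with
  | zero => rw [pow_zero, Module.End.one_apply]; norm_num
  | succ r ih =>
    rw [pow_succ', Module.End.mul_apply, exv_N hJ hD hT, ih,
      show n + 2 + 2 * r = n + 2 * (r + 1) from by ring]

lemma ker_Npow_eq (r : ℕ) :
    LinearMap.ker ((T - Matrix.toLin' D) ^ r) = Kr k r := by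
  ext x
  rw [LinearMap.mem_ker, mem_Kr]
  constructor
  · intro h n hn
    have := exv_Npow hJ hD hT r x (n - 2 * r)
    rw [h, exv_zero, show n - 2*r + 2*r = n from by omega] at this
    exact this.symm
  · intro h
    funext i
    have := exv_Npow hJ hD hT r x (i : ℕ)
    rw [exv_coe, h _ (by omega)] at this
    exact this

-- ⇐ : each Kr is T-invariant
omit hD in
lemma Kr_invariant (r : ℕ) : ∀ x ∈ Kr k r, T x ∈ Kr k r := by
  intro x hx n hn
  rw [exv_T hJ hT]
  rw [mem_Kr] at hx
  rw [hx n hn, hx (n+2) (by omega)]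
  rcases Nat.even_or_odd n with hp | hp
  · rw [if_pos (Nat.even_iff.mp hp), hx (n+1) (by omega)]; ring
  · have hp := Nat.odd_iff.mp hp
    rw [if_neg (by omega), hx (n-1) (by omega)]; ring

omit hD in
lemma exv_u (x : Fin (2 * k) → ℝ) (n : ℕ) :
    exv (T x - a • x) n =
      (if n % 2 = 0 then -b * exv x (n+1) else b * exv x (n-1)) + exv x (n+2) := by
  rw [exv_sub, exv_smul, exv_T hJ hT]; ring

omit hD in
lemma exv_q (x : Fin (2 * k) → ℝ) (n : ℕ) :
    exv (T (T x - a • x) - a • (T x - a • x) + b^2 • x) n =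
      if n % 2 = 0 then -(2*b) * exv x (n+3) + exv x (n+4)
      else 2*b * exv x (n+1) + exv x (n+4) := by
  rw [exv_add, exv_smul, exv_u hJ hT]
  rcases Nat.even_or_odd n with hp | hp
  · have hp : n % 2 = 0 := Nat.even_iff.mp hp
    rw [if_pos hp, if_pos hp, exv_u hJ hT, exv_u hJ hT,
      if_neg (by omega : ¬ (n+1) % 2 = 0), if_pos (by omega : (n+2) % 2 = 0),
      show n + 1 - 1 = n from by omega, show n + 1 + 2 = n + 3 from by omega,
      show n + 2 + 1 = n + 3 from by omega, show n + 2 + 2 = n + 4 from by omega]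
    ring
  · have hp : n % 2 = 1 := Nat.odd_iff.mp hp
    rw [if_neg (by omega : ¬ n % 2 = 0), if_neg (by omega : ¬ n % 2 = 0),
      exv_u hJ hT, exv_u hJ hT,
      if_pos (by omega : (n-1) % 2 = 0), if_neg (by omega : ¬ (n+2) % 2 = 0),
      show n - 1 + 1 = n from by omega, show n - 1 + 2 = n + 1 from by omega,
      show n + 2 - 1 = n + 1 from by omega, show n + 2 + 2 = n + 4 from by omega]
    ring

include hb in
omit hD in
lemma step (W : Submodule ℝ (Fin (2*k) → ℝ)) (hW : ∀ x ∈ W, T x ∈ W)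
    (s : ℕ) (x : Fin (2*k) → ℝ) (hxW : x ∈ W)
    (hbd : ∀ n, 2*(s+1) ≤ n → exv x n = 0)
    (hnz : exv x (2*s) ≠ 0 ∨ exv x (2*s+1) ≠ 0)
    (hKs : Kr k s ≤ W) : Kr k (s+1) ≤ W := by
  intro y hy
  have hy' := (mem_Kr y).mp hy
  have hb' : b ≠ 0 := ne_of_gt hb
  have he' : exv x (2*s)^2 + exv x (2*s+1)^2 ≠ 0 := by
    have h0 : (0:ℝ) ≤ exv x (2*s)^2 := sq_nonneg _
    have h1 : (0:ℝ) ≤ exv x (2*s+1)^2 := sq_nonneg _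
    rcases hnz with h | h
    · have : 0 < exv x (2*s)^2 := by rcases h.lt_or_gt with h'|h' <;> nlinarith
      nlinarith
    · have : 0 < exv x (2*s+1)^2 := by rcases h.lt_or_gt with h'|h' <;> nlinarith
      nlinarith
  have hu : T x - a • x ∈ W := sub_mem (hW x hxW) (Submodule.smul_mem _ _ hxW)
  have hz : y - ((exv x (2*s) * exv y (2*s) + exv x (2*s+1) * exv y (2*s+1)) /
        (exv x (2*s)^2 + exv x (2*s+1)^2)) • x -
      ((exv x (2*s) * exv y (2*s+1) - exv x (2*s+1) * exv y (2*s)) /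
        (b * (exv x (2*s)^2 + exv x (2*s+1)^2))) • (T x - a • x) ∈ Kr k s := by
    intro n hn
    rw [exv_sub, exv_sub, exv_smul, exv_smul, exv_u hJ hT]
    rcases (by omega : n = 2*s ∨ n = 2*s+1 ∨ 2*(s+1) ≤ n) with rfl | rfl | hn2
    · rw [if_pos (by omega : (2*s) % 2 = 0), hbd (2*s+2) (by omega)]
      field_simp
      ring
    · rw [if_neg (by omega : ¬ (2*s+1) % 2 = 0),
        show 2*s+1-1 = 2*s from by omega, hbd (2*s+1+2) (by omega)]
      field_simp
      ring
    · rw [hy' n (by omega), hbd n (by omega), hbd (n+2) (by omega)]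
      rcases Nat.even_or_odd n with hp | hp
      · rw [if_pos (Nat.even_iff.mp hp), hbd (n+1) (by omega)]
        ring
      · have hp := Nat.odd_iff.mp hp
        rw [if_neg (by omega), hbd (n-1) (by omega)]
        ring
  have hrw : y = (y - ((exv x (2*s) * exv y (2*s) + exv x (2*s+1) * exv y (2*s+1)) /
        (exv x (2*s)^2 + exv x (2*s+1)^2)) • x -
      ((exv x (2*s) * exv y (2*s+1) - exv x (2*s+1) * exv y (2*s)) /
        (b * (exv x (2*s)^2 + exv x (2*s+1)^2))) • (T x - a • x)) +
      ((exv x (2*s) * exv y (2*s) + exv x (2*s+1) * exv y (2*s+1)) /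
        (exv x (2*s)^2 + exv x (2*s+1)^2)) • x +
      ((exv x (2*s) * exv y (2*s+1) - exv x (2*s+1) * exv y (2*s)) /
        (b * (exv x (2*s)^2 + exv x (2*s+1)^2))) • (T x - a • x) := by
    abel
  rw [hrw]
  exact add_mem (add_mem (hKs hz) (Submodule.smul_mem _ _ hxW)) (Submodule.smul_mem _ _ hu)

include hb in
omit hD in
lemma climb (W : Submodule ℝ (Fin (2*k) → ℝ)) (hW : ∀ x ∈ W, T x ∈ W) :
    ∀ s x, x ∈ W → (∀ n, 2*(s+1) ≤ n → exv x n = 0) →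
      (exv x (2*s) ≠ 0 ∨ exv x (2*s+1) ≠ 0) → Kr k (s+1) ≤ W := by
  intro s
  induction s with
  | zero =>
    intro x hxW hbd hnz
    refine step hb hJ hT W hW 0 x hxW hbd hnz ?_
    intro z hz
    have hz' := (mem_Kr z).mp hz
    have : z = 0 := by
      funext i
      have h0 := hz' (i:ℕ) (by omega)
      rw [exv_coe] at h0
      simpa using h0
    rw [this]; exact zero_mem W
  | succ s' ih =>
    intro x hxW hbd hnz
    refine step hb hJ hT W hW (s'+1) x hxW hbd hnz ?_
    have hyW : T (T x - a • x) - a • (T x - a • x) + b^2 • x ∈ W := by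
      have h1 : T x - a • x ∈ W := sub_mem (hW x hxW) (Submodule.smul_mem _ _ hxW)
      have h2 : T (T x - a • x) - a • (T x - a • x) ∈ W :=
        sub_mem (hW _ h1) (Submodule.smul_mem _ _ h1)
      exact add_mem h2 (Submodule.smul_mem _ _ hxW)
    refine ih (T (T x - a • x) - a • (T x - a • x) + b^2 • x) hyW ?_ ?_
    · intro n hn
      rw [exv_q hJ hT]
      rcases Nat.even_or_odd n with hp | hp
      · rw [if_pos (Nat.even_iff.mp hp), hbd (n+3) (by omega), hbd (n+4) (by omega)]
        ring
      · have hp := Nat.odd_iff.mp hp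
        rw [if_neg (by omega), hbd (n+1) (by omega), hbd (n+4) (by omega)]
        ring
    · rw [exv_q hJ hT, exv_q hJ hT,
        if_pos (by omega : (2*s') % 2 = 0), if_neg (by omega : ¬ (2*s'+1) % 2 = 0),
        show 2*s'+3 = 2*(s'+1)+1 from by omega, show 2*s'+4 = 2*(s'+1)+2 from by omega,
        show 2*s'+1+1 = 2*(s'+1) from by omega, show 2*s'+1+4 = 2*(s'+1)+3 from by omega,
        hbd (2*(s'+1)+2) (by omega), hbd (2*(s'+1)+3) (by omega)]
      have hb' : b ≠ 0 := ne_of_gt hb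
      rcases hnz with h | h
      · right
        intro hc
        apply h
        have h2 : (2*b) * exv x (2*(s'+1)) = 0 := by linarith
        rcases mul_eq_zero.mp h2 with h' | h'
        · linarith
        · exact h'
      · left
        intro hc
        apply h
        have h2 : -(2*b) * exv x (2*(s'+1)+1) = 0 := by linarith
        rcases mul_eq_zero.mp h2 with h' | h'
        · linarith
        · exact h'

end Main

theorem stmt_11 (k : ℕ) (a b : ℝ) (hb : 0 < b)
    (J D : Matrix (Fin (2 * k)) (Fin (2 * k)) ℝ)
    (hJ : ∀ i j : Fin (2 * k), J i j =
      if i = j then a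
      else if (i : ℕ) / 2 = (j : ℕ) / 2 then
        (if (i : ℕ) + 1 = (j : ℕ) then -b else b)
      else if (j : ℕ) = (i : ℕ) + 2 then 1 else 0)
    (hD : ∀ i j : Fin (2 * k), D i j =
      if i = j then a
      else if (i : ℕ) / 2 = (j : ℕ) / 2 then
        (if (i : ℕ) + 1 = (j : ℕ) then -b else b)
      else 0)
    (T : Module.End ℝ (Fin (2 * k) → ℝ)) (hT : T = Matrix.toLin' J) :
    (∀ W : Submodule ℝ (Fin (2 * k) → ℝ),
      (∀ x ∈ W, T x ∈ W) ↔
        ∃ r ≤ k, W = LinearMap.ker ((T - Matrix.toLin' D) ^ r)) ∧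
    {W : Submodule ℝ (Fin (2 * k) → ℝ) | ∀ x ∈ W, T x ∈ W}.ncard = k + 1 := by
  classical
  have part1 : ∀ W : Submodule ℝ (Fin (2 * k) → ℝ),
      (∀ x ∈ W, T x ∈ W) ↔ ∃ r ≤ k, W = LinearMap.ker ((T - Matrix.toLin' D) ^ r) := by
    intro W
    constructor
    · intro hW
      have hPk : W ≤ Kr k k := by
        intro x hx n hn
        exact exv_zero_of_le x (by omega)
      have hex : ∃ r, W ≤ Kr k r := ⟨k, hPk⟩
      have hspec : W ≤ Kr k (Nat.find hex) := Nat.find_spec hex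
      refine ⟨Nat.find hex, Nat.find_le hPk, ?_⟩
      rw [ker_Npow_eq hJ hD hT]
      by_cases h0 : Nat.find hex = 0
      · rw [h0]
        rw [h0] at hspec
        apply le_antisymm hspec
        intro z hz
        have hz' := (mem_Kr z).mp hz
        have hz0 : z = 0 := by
          funext i
          have h1 := hz' (i:ℕ) (by omega)
          rw [exv_coe] at h1
          simpa using h1
        rw [hz0]; exact zero_mem W
      · obtain ⟨s, hs⟩ := Nat.exists_eq_succ_of_ne_zero h0
        rw [hs] at hspec ⊢
        have hmin : ¬ W ≤ Kr k s := Nat.find_min hex (by omega)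
        apply le_antisymm hspec
        obtain ⟨x, hxW, hxn⟩ := SetLike.not_le_iff_exists.mp hmin
        have hxb := (mem_Kr x).mp (hspec hxW)
        have hxn' : ∃ n, 2*s ≤ n ∧ exv x n ≠ 0 := by
          by_contra hcon
          push_neg at hcon
          exact hxn ((mem_Kr x).mpr fun n hn => hcon n hn)
        obtain ⟨n0, hn0, hne⟩ := hxn'
        have hnz : exv x (2*s) ≠ 0 ∨ exv x (2*s+1) ≠ 0 := by
          rcases (by omega : n0 = 2*s ∨ n0 = 2*s+1 ∨ 2*(s+1) ≤ n0) with rfl | rfl | h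
          · exact Or.inl hne
          · exact Or.inr hne
          · exact absurd (hxb n0 h) hne
        exact climb hb hJ hT W hW s x hxW hxb hnz
    · rintro ⟨r, -, rfl⟩
      rw [ker_Npow_eq hJ hD hT]
      exact Kr_invariant hJ hT r
  have hset : {W : Submodule ℝ (Fin (2 * k) → ℝ) | ∀ x ∈ W, T x ∈ W} =
      (fun r => Kr k r) '' (Set.Iic k) := by
    ext W
    simp only [Set.mem_setOf_eq, Set.mem_image, Set.mem_Iic]
    constructor
    · intro h
      obtain ⟨r, hrk, hW⟩ := (part1 W).mp h
      exact ⟨r, hrk, by rw [hW, ker_Npow_eq hJ hD hT]⟩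
    · rintro ⟨r, hrk, rfl⟩
      exact Kr_invariant hJ hT r
  have key : ∀ u v : ℕ, u < v → v ≤ k → Kr k u ≠ Kr k v := by
    intro u v huv hvk hEq
    have hmem : (fun j : Fin (2*k) => if (j:ℕ) = 2*u then (1:ℝ) else 0) ∈ Kr k v := by
      intro n hn
      rw [exv]
      split
      · show (if n = 2*u then (1:ℝ) else 0) = 0
        rw [if_neg (by omega)]
      · rfl
    rw [← hEq] at hmem
    have h1 := hmem (2*u) (le_refl _)
    rw [exv, dif_pos (by omega : 2*u < 2*k)] at h1
    simp at h1
  have hinj : Set.InjOn (fun r => Kr k r) (Set.Iic k) := by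
    intro r1 h1 r2 h2 hK
    rcases lt_trichotomy r1 r2 with h | h | h
    · exact absurd hK (key r1 r2 h (Set.mem_Iic.mp h2))
    · exact h
    · exact absurd hK.symm (key r2 r1 h (Set.mem_Iic.mp h1))
  refine ⟨part1, ?_⟩
  rw [hset, Set.ncard_image_of_injOn hinj, ← Finset.coe_Iic, Set.ncard_coe_finset,
    Nat.card_Iic]
end

section
/- Let T be the linear operator on ℝ^{2k} given by the real Jordan block J*_{ζ,k} with ζ = a+bi, b > 0, and let W be a T-invariant subspace. If w = (w_1,…,w_s,0,…,0) ∈ W with w_s ≠ 0 and no vector of W has a nonzero component beyond position s, then s is even. -/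
theorem stmt_12 (k : ℕ) (a b : ℝ) (hb : 0 < b)
    (J : Matrix (Fin (2 * k)) (Fin (2 * k)) ℝ)
    (hJ : ∀ i j : Fin (2 * k), J i j =
      if i = j then a
      else if (i : ℕ) / 2 = (j : ℕ) / 2 then
        (if (i : ℕ) + 1 = (j : ℕ) then -b else b)
      else if (j : ℕ) = (i : ℕ) + 2 then 1 else 0)
    (T : Module.End ℝ (Fin (2 * k) → ℝ)) (hT : T = Matrix.toLin' J)
    (W : Submodule ℝ (Fin (2 * k) → ℝ)) (hW : ∀ x ∈ W, T x ∈ W)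
    (w : Fin (2 * k) → ℝ) (hw : w ∈ W) (s : Fin (2 * k)) (hs : w s ≠ 0)
    (hmax : ∀ v ∈ W, ∀ j : Fin (2 * k), s < j → v j = 0) :
    Even ((s : ℕ) + 1) := by
  by_contra h
  have hsev : Even (s : ℕ) := by
    rcases Nat.even_or_odd (s : ℕ) with he | ho
    · exact he
    · exact absurd ho.add_one h
  obtain ⟨m, hm⟩ := hsev
  have hslt := s.isLt
  have hlt : (s : ℕ) + 1 < 2 * k := by omega
  set j : Fin (2 * k) := ⟨(s : ℕ) + 1, hlt⟩ with hjdef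
  have hTw := hW w hw
  have hzero := hmax (T w) hTw j (by simp [hjdef, Fin.lt_def])
  rw [hT, Matrix.toLin'_apply] at hzero
  have hsum : J.mulVec w j = b * w s := by
    unfold Matrix.mulVec dotProduct
    rw [Finset.sum_eq_single s]
    · have h1 : j ≠ s := by
        simp only [hjdef, ne_eq, Fin.ext_iff]; omega
      have h2 : (j : ℕ) / 2 = (s : ℕ) / 2 := by
        simp only [hjdef]; omega
      have h3 : ¬ ((j : ℕ) + 1 = (s : ℕ)) := by
        simp only [hjdef]; omega
      show J j s * w s = b * w s
      rw [hJ, if_neg h1, if_pos h2, if_neg h3]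
    · intro x _ hx
      rcases lt_or_gt_of_ne hx with hlt' | hgt'
      · -- x < s : J j x = 0
        have hxs : (x : ℕ) < (s : ℕ) := hlt'
        have h1 : j ≠ x := by
          simp only [hjdef, ne_eq, Fin.ext_iff]; omega
        have h2 : ¬ ((j : ℕ) / 2 = (x : ℕ) / 2) := by
          simp only [hjdef]; omega
        have h3 : ¬ ((x : ℕ) = (j : ℕ) + 2) := by
          simp only [hjdef]; omega
        show J j x * w x = 0
        rw [hJ, if_neg h1, if_neg h2, if_neg h3, zero_mul]
      · show J j x * w x = 0
        rw [hmax w hw x hgt', mul_zero]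
    · intro h'; exact absurd (Finset.mem_univ s) h'
  rw [hsum] at hzero
  exact hs ((mul_eq_zero.mp hzero).resolve_left (ne_of_gt hb))
end

section
/- Let V = V_1 ⊕ V_2 with T ∈ L(V) satisfying T(V_i) ⊆ V_i, and suppose the minimal polynomials of T|_{V_1} and T|_{V_2} are coprime. If V_1 has exactly m_1 T|_{V_1}-invariant subspaces and V_2 has exactly m_2 T|_{V_2}-invariant subspaces, then V has exactly m_1 · m_2 T-invariant subspaces. -/
open Polynomial

lemma aux_mem_aeval {F V : Type*} [Field F] [AddCommGroup V] [Module F V]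
    (T : Module.End F V) (W : Submodule F V) (hW : ∀ x ∈ W, T x ∈ W)
    (q : F[X]) {x : V} (hx : x ∈ W) : aeval T q x ∈ W := by
  have hpow : ∀ n : ℕ, (T ^ n) x ∈ W := by
    intro n
    induction n with
    | zero => simpa using hx
    | succ n ih => rw [pow_succ', Module.End.mul_apply]; exact hW _ ih
  induction q using Polynomial.induction_on' with
  | add p q hp hq => simpa [map_add] using W.add_mem hp hq
  | monomial n c =>
    simp only [aeval_monomial, Module.End.mul_apply, LinearMap.smul_apply,
      Module.algebraMap_end_apply]
    exact W.smul_mem _ (hpow n)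

lemma aux_aeval_restrict {F V : Type*} [Field F] [AddCommGroup V] [Module F V]
    (T : Module.End F V) (V₁ : Submodule F V) (h1 : ∀ x ∈ V₁, T x ∈ V₁)
    (q : F[X]) (x : V₁) : aeval T q (x : V) = ((aeval (T.restrict h1) q x : V₁) : V) := by
  have hpow : ∀ n : ℕ, (T ^ n) (x : V) = (((T.restrict h1) ^ n) x : V₁) := by
    intro n
    rw [Module.End.pow_restrict, LinearMap.restrict_coe_apply]
  induction q using Polynomial.induction_on' with
  | add p q hp hq => simp [map_add, hp, hq]
  | monomial n c =>
    simp only [aeval_monomial, Module.End.mul_apply, LinearMap.smul_apply,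
      Module.algebraMap_end_apply, Submodule.coe_smul]
    rw [hpow]

theorem stmt_14 (F : Type*) [Field F] (V : Type*) [AddCommGroup V] [Module F V]
    [FiniteDimensional F V] (T : Module.End F V) (V₁ V₂ : Submodule F V)
    (hcompl : IsCompl V₁ V₂)
    (h1 : ∀ x ∈ V₁, T x ∈ V₁) (h2 : ∀ x ∈ V₂, T x ∈ V₂)
    (hcop : IsCoprime (minpoly F (T.restrict h1)) (minpoly F (T.restrict h2)))
    (m₁ m₂ : ℕ)
    (hfin1 : {W : Submodule F ↥V₁ | ∀ x ∈ W, T.restrict h1 x ∈ W}.Finite)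
    (hfin2 : {W : Submodule F ↥V₂ | ∀ x ∈ W, T.restrict h2 x ∈ W}.Finite)
    (hm1 : {W : Submodule F ↥V₁ | ∀ x ∈ W, T.restrict h1 x ∈ W}.ncard = m₁)
    (hm2 : {W : Submodule F ↥V₂ | ∀ x ∈ W, T.restrict h2 x ∈ W}.ncard = m₂) :
    {W : Submodule F V | ∀ x ∈ W, T x ∈ W}.Finite ∧
    {W : Submodule F V | ∀ x ∈ W, T x ∈ W}.ncard = m₁ * m₂ := by
  set S₁ := {W : Submodule F ↥V₁ | ∀ x ∈ W, T.restrict h1 x ∈ W} with hS₁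
  set S₂ := {W : Submodule F ↥V₂ | ∀ x ∈ W, T.restrict h2 x ∈ W} with hS₂
  set S := {W : Submodule F V | ∀ x ∈ W, T x ∈ W} with hS
  set f : Submodule F ↥V₁ × Submodule F ↥V₂ → Submodule F V :=
    fun p => p.1.map V₁.subtype ⊔ p.2.map V₂.subtype with hf
  have hbot12 : ∀ W₂ : Submodule F ↥V₂, W₂.map V₂.subtype ⊓ V₁ = ⊥ := by
    intro W₂
    rw [← le_bot_iff, ← hcompl.inf_eq_bot, inf_comm V₁ V₂]
    exact inf_le_inf_right _ (Submodule.map_subtype_le V₂ W₂)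
  have hbot21 : ∀ W₁ : Submodule F ↥V₁, W₁.map V₁.subtype ⊓ V₂ = ⊥ := by
    intro W₁
    rw [← le_bot_iff, ← hcompl.inf_eq_bot]
    exact inf_le_inf_right _ (Submodule.map_subtype_le V₁ W₁)
  have hinf1 : ∀ (W₁ : Submodule F ↥V₁) (W₂ : Submodule F ↥V₂),
      f (W₁, W₂) ⊓ V₁ = W₁.map V₁.subtype := by
    intro W₁ W₂
    show (W₁.map V₁.subtype ⊔ W₂.map V₂.subtype) ⊓ V₁ = _
    rw [sup_inf_assoc_of_le _ (Submodule.map_subtype_le V₁ W₁), hbot12, sup_bot_eq]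
  have hinf2 : ∀ (W₁ : Submodule F ↥V₁) (W₂ : Submodule F ↥V₂),
      f (W₁, W₂) ⊓ V₂ = W₂.map V₂.subtype := by
    intro W₁ W₂
    show (W₁.map V₁.subtype ⊔ W₂.map V₂.subtype) ⊓ V₂ = _
    rw [sup_comm, sup_inf_assoc_of_le _ (Submodule.map_subtype_le V₂ W₂), hbot21, sup_bot_eq]
  have hbij : Set.BijOn f (S₁ ×ˢ S₂) S := by
    refine ⟨?_, ?_, ?_⟩
    · -- MapsTo
      rintro ⟨W₁, W₂⟩ ⟨hW₁, hW₂⟩ x hx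
      rcases Submodule.mem_sup.1 hx with ⟨y, hy, z, hz, rfl⟩
      rw [map_add]
      refine Submodule.add_mem_sup ?_ ?_
      · rcases hy with ⟨w, hw, rfl⟩
        exact ⟨T.restrict h1 w, hW₁ w hw, (LinearMap.restrict_coe_apply T h1 w).symm ▸ rfl⟩
      · rcases hz with ⟨w, hw, rfl⟩
        exact ⟨T.restrict h2 w, hW₂ w hw, (LinearMap.restrict_coe_apply T h2 w).symm ▸ rfl⟩
    · -- InjOn
      rintro ⟨W₁, W₂⟩ - ⟨W₁', W₂'⟩ - heq
      have e1 : W₁.map V₁.subtype = W₁'.map V₁.subtype := by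
        rw [← hinf1 W₁ W₂, ← hinf1 W₁' W₂', heq]
      have e2 : W₂.map V₂.subtype = W₂'.map V₂.subtype := by
        rw [← hinf2 W₁ W₂, ← hinf2 W₁' W₂', heq]
      have i1 := Submodule.map_injective_of_injective V₁.injective_subtype e1
      have i2 := Submodule.map_injective_of_injective V₂.injective_subtype e2
      simp [Prod.ext_iff, i1, i2]
    · -- SurjOn
      intro W hW
      refine ⟨(W.comap V₁.subtype, W.comap V₂.subtype), ⟨?_, ?_⟩, ?_⟩
      · intro x hx
        simp only [Submodule.mem_comap] at hx ⊢
        simpa only [Submodule.subtype_apply, LinearMap.restrict_coe_apply] using hW _ hx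
      · intro x hx
        simp only [Submodule.mem_comap] at hx ⊢
        simpa only [Submodule.subtype_apply, LinearMap.restrict_coe_apply] using hW _ hx
      · show (W.comap V₁.subtype).map V₁.subtype ⊔ (W.comap V₂.subtype).map V₂.subtype = W
        rw [Submodule.map_comap_subtype, Submodule.map_comap_subtype]
        refine le_antisymm (sup_le inf_le_right inf_le_right) ?_
        intro w hw
        obtain ⟨a, b, hab⟩ := hcop
        set p₁ := minpoly F (T.restrict h1)
        set p₂ := minpoly F (T.restrict h2)
        -- decompose w = w₁ + w₂
        have hwtop : w ∈ V₁ ⊔ V₂ := by rw [hcompl.sup_eq_top]; trivial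
        rcases Submodule.mem_sup.1 hwtop with ⟨w₁, hw₁, w₂, hw₂, rfl⟩
        have key1 : aeval T (a * p₁) (w₁ + w₂) ∈ V₂ := by
          rw [map_mul, Module.End.mul_apply, map_add]
          have e0 : aeval T p₁ w₁ = 0 := by
            rw [show w₁ = ((⟨w₁, hw₁⟩ : V₁) : V) from rfl, aux_aeval_restrict T V₁ h1]
            simp [p₁, minpoly.aeval]
          rw [e0, zero_add]
          exact aux_mem_aeval T V₂ h2 a (aux_mem_aeval T V₂ h2 p₁ hw₂)
        have key2 : aeval T (b * p₂) (w₁ + w₂) ∈ V₁ := by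
          rw [map_mul, Module.End.mul_apply, map_add]
          have e0 : aeval T p₂ w₂ = 0 := by
            rw [show w₂ = ((⟨w₂, hw₂⟩ : V₂) : V) from rfl, aux_aeval_restrict T V₂ h2]
            simp [p₂, minpoly.aeval]
          rw [e0, add_zero]
          exact aux_mem_aeval T V₁ h1 b (aux_mem_aeval T V₁ h1 p₂ hw₁)
        have hsum : aeval T (b * p₂) (w₁ + w₂) + aeval T (a * p₁) (w₁ + w₂) = w₁ + w₂ := by
          have h' : aeval T (b * p₂ + a * p₁) (w₁ + w₂) = w₁ + w₂ := by
            rw [show b * p₂ + a * p₁ = 1 from (add_comm _ _).trans hab, map_one,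
              Module.End.one_apply]
          rw [show aeval T (b * p₂ + a * p₁) = aeval T (b * p₂) + aeval T (a * p₁) from
            map_add _ _ _, LinearMap.add_apply] at h'
          exact h'
        rw [← hsum]
        refine Submodule.add_mem_sup ⟨key2, ?_⟩ ⟨key1, ?_⟩
        · exact aux_mem_aeval T W hW _ hw
        · exact aux_mem_aeval T W hW _ hw
  have himg : S = f '' (S₁ ×ˢ S₂) := hbij.image_eq.symm
  have hfinS : S.Finite := himg ▸ (hfin1.prod hfin2).image f
  refine ⟨hfinS, ?_⟩
  rw [himg, Set.ncard_image_of_injOn hbij.injOn, ← hm1, ← hm2,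
    ← Nat.card_coe_set_eq, ← Nat.card_coe_set_eq, ← Nat.card_coe_set_eq,
    Nat.card_congr (Equiv.Set.prod S₁ S₂), Nat.card_prod]
end

section
/- There is no linear operator T on ℝ^4 such that ℝ^4 has exactly 10 T-invariant subspaces. More precisely, the set of integers m for which some T ∈ L(ℝ^4) has exactly m invariant subspaces is {3, 4, 5, 6, 8, 9, 12, 16} (together with the possibility of infinitely many). -/
/-!
If `T` has only finitely many invariant subspaces, then `ℝ⁴`, viewed as an `ℝ[X]`-module through
`T`, is cyclic: a real vector space is not a finite union of proper subspaces, so some `ℝ[X] ∙ v`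
is everything. Hence `ℝ⁴ ≅ ℝ[X] ⧸ (μ)` with `deg μ = 4`, and invariant subspaces correspond to
monic divisors of `μ`; if `μ = ∏ qᵢ ^ eᵢ` there are `∏ (eᵢ + 1)` of them. Real irreducibles have
degree 1 or 2 and `∑ eᵢ deg qᵢ = 4`, which leaves exactly the values 3, 4, 5, 6, 8, 9, 12, 16, and
each is attained by multiplication by `X` on `ℝ[X] ⧸ (μ)` for a suitable `μ`.
-/

open Polynomial UniqueFactorizationMonoid Module

noncomputable section

/-- For `n ≤ 4`, the possible numbers `∏ (eᵢ + 1)` of monic divisors of a real polynomial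
`∏ qᵢ ^ eᵢ` of degree `n`. -/
def realDivisorCounts : ℕ → Finset ℕ
  | 0 => {1}
  | 1 => {2}
  | 2 => {2, 3, 4}
  | 3 => {4, 6, 8}
  | 4 => {3, 4, 5, 6, 8, 9, 12, 16}
  | _ => ∅

theorem mul_mem_realDivisorCounts :
    ∀ c ∈ Finset.Icc 1 4, ∀ d ∈ Finset.Icc 1 2, ∀ m ≤ 4, c * d + m ≤ 4 →
      ∀ x ∈ realDivisorCounts m, (c + 1) * x ∈ realDivisorCounts (c * d + m) := by
  decide

theorem prod_add_one_mem_realDivisorCounts {ι : Type*} (s : Finset ι) (c d : ι → ℕ)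
    (hc : ∀ i ∈ s, 0 < c i) (hd : ∀ i ∈ s, d i ∈ Finset.Icc 1 2) (hs : ∑ i ∈ s, c i * d i ≤ 4) :
    ∏ i ∈ s, (c i + 1) ∈ realDivisorCounts (∑ i ∈ s, c i * d i) := by
  classical
  induction s using Finset.induction_on with
  | empty => simp [realDivisorCounts]
  | insert a s ha ih =>
    rw [Finset.sum_insert ha] at hs ⊢
    rw [Finset.prod_insert ha]
    have hda := hd a (Finset.mem_insert_self a s)
    have hca : c a ≤ 4 := (Nat.le_mul_of_pos_right _ (Finset.mem_Icc.1 hda).1).trans (by omega)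
    refine mul_mem_realDivisorCounts (c a) ?_ (d a) hda _ (by omega) hs _
      (ih (fun i hi ↦ hc i (Finset.mem_insert_of_mem hi))
        (fun i hi ↦ hd i (Finset.mem_insert_of_mem hi)) (by omega))
    exact Finset.mem_Icc.2 ⟨hc a (Finset.mem_insert_self a s), hca⟩

section Divisors

variable {α : Type*} [CommMonoidWithZero α] [StrongNormalizationMonoid α]
  [UniqueFactorizationMonoid α]

theorem map_normalize_of_le_normalizedFactors {a : α} {t : Multiset α}
    (ht : t ≤ normalizedFactors a) : t.map normalize = t :=
  (Multiset.map_congr rfl fun q hq ↦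
    normalize_normalized_factor q (Multiset.mem_of_le ht hq)).trans (Multiset.map_id t)

theorem normalize_prod_of_le_normalizedFactors {a : α} {t : Multiset α}
    (ht : t ≤ normalizedFactors a) : normalize t.prod = t.prod := by
  rw [← coe_normalizeHom, map_multiset_prod, coe_normalizeHom,
    map_normalize_of_le_normalizedFactors ht]

def normalizedDivisorsEquivIicNormalizedFactors {a : α} (ha : a ≠ 0) :
    {d : α // d ∣ a ∧ normalize d = d} ≃ Set.Iic (normalizedFactors a) where
  toFun d := ⟨normalizedFactors d.1, (dvd_iff_normalizedFactors_le_normalizedFactors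
    (ne_zero_of_dvd_ne_zero ha d.2.1) ha).1 d.2.1⟩
  invFun t := ⟨t.1.prod, (Multiset.prod_dvd_prod_of_le t.2).trans (prod_normalizedFactors ha).dvd,
    normalize_prod_of_le_normalizedFactors t.2⟩
  left_inv d := Subtype.ext <|
    (prod_normalizedFactors (ne_zero_of_dvd_ne_zero ha d.2.1)).eq_of_normalized
      (normalize_prod_of_le_normalizedFactors le_rfl) d.2.2
  right_inv t := Subtype.ext <| by
    change normalizedFactors t.1.prod = t.1
    rw [normalizedFactors_prod_eq _ fun q hq ↦
      irreducible_of_normalized_factor q (Multiset.mem_of_le t.2 hq),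
      map_normalize_of_le_normalizedFactors t.2]

end Divisors

section PrincipalIdealRing

variable {R : Type*} [CommRing R] [IsDomain R] [IsPrincipalIdealRing R]
  [StrongNormalizationMonoid R]

def normalizedDivisorsEquivIciSpanSingleton (a : R) :
    {d : R // d ∣ a ∧ normalize d = d} ≃ Set.Ici (Ideal.span {a}) :=
  Equiv.ofBijective
    (fun d ↦ ⟨Ideal.span {d.1}, Ideal.span_singleton_le_span_singleton.2 d.2.1⟩) <| by
    refine ⟨fun d e h ↦ Subtype.ext ?_, fun I ↦ ?_⟩
    · exact (Ideal.span_singleton_eq_span_singleton.1 (congrArg Subtype.val h)).eq_of_normalized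
        d.2.2 e.2.2
    · set g := Submodule.IsPrincipal.generator I.1
      have hg : Ideal.span {normalize g} = I := by
        rw [← Ideal.span_singleton_generator I.1,
          Ideal.span_singleton_eq_span_singleton.2 (associated_normalize g).symm]
      refine ⟨⟨normalize g, ?_, normalize_idem g⟩, Subtype.ext hg⟩
      exact Ideal.span_singleton_le_span_singleton.1 (hg ▸ I.2)

def submoduleQuotientSpanEquivIic {a : R} (ha : a ≠ 0) :
    Submodule R (R ⧸ Ideal.span {a}) ≃ Set.Iic (normalizedFactors a) :=
  (Submodule.comapMkQRelIso _).toEquiv.trans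
    ((normalizedDivisorsEquivIciSpanSingleton a).symm.trans
      (normalizedDivisorsEquivIicNormalizedFactors ha))

theorem card_submodule_quotient_span_singleton [DecidableEq R] {a : R} (ha : a ≠ 0) :
    Nat.card (Submodule R (R ⧸ Ideal.span {a})) =
      ∏ q ∈ (normalizedFactors a).toFinset, ((normalizedFactors a).count q + 1) := by
  rw [Nat.card_congr (submoduleQuotientSpanEquivIic ha), Nat.card_eq_card_toFinset,
    Set.toFinset_Iic, Multiset.card_Iic]

end PrincipalIdealRing

theorem Submodule.exists_span_singleton_eq_top_of_finite {K A N : Type*} [Field K] [Infinite K]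
    [Semiring A] [Algebra K A] [AddCommGroup N] [Module K N] [Module A N] [IsScalarTower K A N]
    [Finite (Submodule A N)] : ∃ v : N, Submodule.span A {v} = ⊤ := by
  have hfin : (Set.range fun v : N ↦ (Submodule.span A {v}).restrictScalars K).Finite :=
    (Set.finite_range (Submodule.restrictScalars K)).subset
      (Set.range_subset_iff.2 fun v ↦ ⟨_, rfl⟩)
  have hcover : ⋃ p ∈ hfin.toFinset, (p : Set N) = Set.univ :=
    Set.eq_univ_of_forall fun v ↦ Set.mem_biUnion (hfin.mem_toFinset.2 ⟨v, rfl⟩)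
      (Submodule.mem_span_singleton_self v)
  obtain ⟨v, hv⟩ := hfin.mem_toFinset.1 (Subspace.top_mem_of_biUnion_eq_univ hcover)
  exact ⟨v, (Submodule.restrictScalars_eq_top_iff K A N).1 hv⟩

theorem exists_quotient_span_singleton_linearEquiv {R N : Type*} [CommRing R]
    [IsPrincipalIdealRing R] [AddCommGroup N] [Module R N] {v : N}
    (hv : Submodule.span R {v} = ⊤) : ∃ a : R, Nonempty ((R ⧸ Ideal.span {a}) ≃ₗ[R] N) :=
  ⟨_, ⟨(Submodule.quotEquivOfEq _ _ (Ideal.span_singleton_generator _)).trans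
    ((Ideal.quotTorsionOfEquivSpanSingleton R N v).trans
      ((LinearEquiv.ofEq _ _ hv).trans Submodule.topEquiv))⟩⟩

theorem Polynomial.sum_count_mul_natDegree_normalizedFactors {K : Type*} [Field K]
    [DecidableEq K] [DecidableEq K[X]] {p : K[X]} (hp : p ≠ 0) :
    ∑ q ∈ (normalizedFactors p).toFinset, (normalizedFactors p).count q * q.natDegree =
      p.natDegree := by
  rw [← natDegree_eq_of_degree_eq (degree_eq_degree_of_associated (prod_normalizedFactors hp)),
    natDegree_multiset_prod _ (zero_notMem_normalizedFactors p), Finset.sum_multiset_map_count]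
  rfl

theorem Polynomial.prod_count_add_one_mem_realDivisorCounts {p : ℝ[X]} (hp : p ≠ 0)
    (h4 : p.natDegree ≤ 4) :
    ∏ q ∈ (normalizedFactors p).toFinset, ((normalizedFactors p).count q + 1) ∈
      realDivisorCounts p.natDegree := by
  rw [← sum_count_mul_natDegree_normalizedFactors hp] at h4 ⊢
  refine prod_add_one_mem_realDivisorCounts _ _ _ (fun q hq ↦ ?_) (fun q hq ↦ ?_) h4
  · exact Multiset.count_pos.2 (Multiset.mem_toFinset.1 hq)
  · have hirr := irreducible_of_normalized_factor q (Multiset.mem_toFinset.1 hq)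
    exact Finset.mem_Icc.2 ⟨hirr.natDegree_pos, hirr.natDegree_le_two⟩

theorem card_submodule_mem_realDivisorCounts (N : Type*) [AddCommGroup N] [Module ℝ N]
    [Module ℝ[X] N] [IsScalarTower ℝ ℝ[X] N] [FiniteDimensional ℝ N] [Finite (Submodule ℝ[X] N)]
    (hN : finrank ℝ N ≤ 4) :
    Nat.card (Submodule ℝ[X] N) ∈ realDivisorCounts (finrank ℝ N) := by
  obtain ⟨v, hv⟩ := Submodule.exists_span_singleton_eq_top_of_finite (K := ℝ) (A := ℝ[X])
    (N := N)
  obtain ⟨a, ⟨e⟩⟩ := exists_quotient_span_singleton_linearEquiv hv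
  have ha : a ≠ 0 := by
    rintro rfl
    have := Module.Finite.equiv (e.restrictScalars ℝ).symm
    exact Polynomial.not_finite (Module.Finite.equiv
      ((Submodule.quotEquivOfEqBot _ (Ideal.span_singleton_eq_bot.2 rfl)).restrictScalars ℝ))
  have hdeg : finrank ℝ N = a.natDegree := by
    rw [← (e.restrictScalars ℝ).finrank_eq, finrank_quotient_span_eq_natDegree]
  rw [← Nat.card_congr (Submodule.orderIsoMapComap e).toEquiv,
    card_submodule_quotient_span_singleton ha, hdeg]
  exact a.prod_count_add_one_mem_realDivisorCounts ha (hdeg ▸ hN)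

def Module.End.invtSubmodulesEquivSubmoduleAEval' {K M : Type*} [CommSemiring K]
    [AddCommMonoid M] [Module K M] (T : Module.End K M) :
    {W : Submodule K M | ∀ x ∈ W, T x ∈ W} ≃ Submodule K[X] (AEval' T) :=
  (Equiv.subtypeEquivRight fun _ ↦ Iff.rfl).trans (AEval.mapSubmodule K M T).toEquiv

theorem Module.End.ncard_invtSubmodules {K M : Type*} [CommSemiring K] [AddCommMonoid M]
    [Module K M] (T : Module.End K M) :
    {W : Submodule K M | ∀ x ∈ W, T x ∈ W}.ncard = Nat.card (Submodule K[X] (AEval' T)) := by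
  rw [← Nat.card_coe_set_eq]
  exact Nat.card_congr T.invtSubmodulesEquivSubmoduleAEval'

/-- Multiplication by `X` on `K[X] ⧸ (μ)`, written in a basis. -/
theorem exists_aeval_linearEquiv_quotient_span_singleton {K : Type*} [Field K] {μ : K[X]}
    {n : ℕ} (hμ : μ ≠ 0) (hn : μ.natDegree = n) : ∃ T : Module.End K (Fin n → K),
      Nonempty (AEval' T ≃ₗ[K[X]] K[X] ⧸ Ideal.span {μ}) := by
  let e : (K[X] ⧸ Ideal.span {μ}) ≃ₗ[K] (Fin n → K) :=
    ((AdjoinRoot.powerBasis hμ).basis.reindex (finCongr hn)).equivFun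
  refine ⟨e.conj (DistribSMul.toLinearMap K _ (X : K[X])), ⟨LinearEquiv.ofAEval _ e.symm ?_⟩⟩
  intro m
  simp [LinearEquiv.conj_apply]

/-- Labels for some monic irreducible real polynomials, so that the witnesses realizing each
count can be checked by `decide`. -/
def realFactor : ℕ ⊕ ℕ → ℝ[X]
  | .inl a => X - C (a : ℝ)
  | .inr b => X ^ 2 + C ((b : ℝ) + 1)

theorem natDegree_realFactor (k : ℕ ⊕ ℕ) :
    (realFactor k).natDegree = Sum.elim (fun _ ↦ 1) (fun _ ↦ 2) k := by
  cases k with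
  | inl a => exact natDegree_X_sub_C _
  | inr b => exact natDegree_X_pow_add_C

theorem monic_realFactor (k : ℕ ⊕ ℕ) : (realFactor k).Monic := by
  cases k with
  | inl a => exact monic_X_sub_C _
  | inr b => exact monic_X_pow_add_C _ two_ne_zero

theorem irreducible_realFactor (k : ℕ ⊕ ℕ) : Irreducible (realFactor k) := by
  cases k with
  | inl a => exact irreducible_X_sub_C _
  | inr b =>
    refine irreducible_of_degree_le_three_of_not_isRoot
      (by simp [natDegree_realFactor (.inr b)]) fun x hx ↦ ?_
    simp only [realFactor, IsRoot, eval_add, eval_pow, eval_X, eval_C] at hx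
    nlinarith [sq_nonneg x, b.cast_nonneg (α := ℝ)]

theorem realFactor_injective : Function.Injective realFactor := by
  rintro (a | b) (a' | b') h
  · simpa [realFactor] using h
  · simpa [natDegree_realFactor] using congrArg natDegree h
  · simpa [natDegree_realFactor] using congrArg natDegree h
  · simpa [realFactor] using h

theorem exists_ncard_invtSubmodules_eq_prod (s : Multiset (ℕ ⊕ ℕ))
    (hs : (s.map (Sum.elim (fun _ ↦ 1) fun _ ↦ 2)).sum = 4) :
    ∃ T : Module.End ℝ (Fin 4 → ℝ), {W : Submodule ℝ (Fin 4 → ℝ) | ∀ x ∈ W, T x ∈ W}.Finite ∧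
      {W : Submodule ℝ (Fin 4 → ℝ) | ∀ x ∈ W, T x ∈ W}.ncard =
        ∏ k ∈ s.toFinset, (s.count k + 1) := by
  have hmonic : (s.map realFactor).prod.Monic :=
    monic_multiset_prod_of_monic _ _ fun k _ ↦ monic_realFactor k
  have hdeg : (s.map realFactor).prod.natDegree = 4 := by
    rw [natDegree_multiset_prod_of_monic _
      (Multiset.forall_mem_map_iff.2 fun k _ ↦ monic_realFactor k), Multiset.map_map, ← hs]
    exact congrArg _ (Multiset.map_congr rfl fun k _ ↦ natDegree_realFactor k)
  have hfactors : normalizedFactors (s.map realFactor).prod = s.map realFactor := by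
    rw [normalizedFactors_prod_eq _
      (Multiset.forall_mem_map_iff.2 fun k _ ↦ irreducible_realFactor k), Multiset.map_map]
    exact Multiset.map_congr rfl fun k _ ↦ (monic_realFactor k).normalize_eq_self
  obtain ⟨T, ⟨e⟩⟩ := exists_aeval_linearEquiv_quotient_span_singleton hmonic.ne_zero hdeg
  have hcard : {W : Submodule ℝ (Fin 4 → ℝ) | ∀ x ∈ W, T x ∈ W}.ncard =
      ∏ k ∈ s.toFinset, (s.count k + 1) := by
    rw [T.ncard_invtSubmodules, Nat.card_congr (Submodule.orderIsoMapComap e).toEquiv,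
      card_submodule_quotient_span_singleton hmonic.ne_zero, hfactors, Multiset.toFinset_map,
      Finset.prod_image realFactor_injective.injOn]
    simp only [Multiset.count_map_eq_count' _ _ realFactor_injective]
  exact ⟨T, Set.finite_of_ncard_ne_zero (hcard ▸ Finset.prod_ne_zero_iff.2 fun _ _ ↦
    Nat.succ_ne_zero _), hcard⟩
end

theorem stmt_15 :
    {m : ℕ | ∃ T : Module.End ℝ (Fin 4 → ℝ),
      {W : Submodule ℝ (Fin 4 → ℝ) | ∀ x ∈ W, T x ∈ W}.Finite ∧
      {W : Submodule ℝ (Fin 4 → ℝ) | ∀ x ∈ W, T x ∈ W}.ncard = m} =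
    {3, 4, 5, 6, 8, 9, 12, 16} := by
  ext m
  constructor
  · rintro ⟨T, hfin, rfl⟩
    have : Finite (Submodule ℝ[X] (AEval' T)) :=
      have := hfin.to_subtype
      Finite.of_equiv _ T.invtSubmodulesEquivSubmoduleAEval'
    have h4 : finrank ℝ (AEval' T) = 4 := by rw [← (AEval'.of T).finrank_eq, finrank_fin_fun]
    rw [T.ncard_invtSubmodules]
    simpa [h4, realDivisorCounts] using card_submodule_mem_realDivisorCounts (AEval' T) h4.le
  · rintro (rfl | rfl | rfl | rfl | rfl | rfl | rfl | rfl)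
    -- (X²+1)², (X²+1)(X²+2), X⁴, X²(X²+1), X³(X-1), X²(X-1)², X²(X-1)(X-2), X(X-1)(X-2)(X-3)
    exacts [exists_ncard_invtSubmodules_eq_prod {.inr 0, .inr 0} (by decide),
      exists_ncard_invtSubmodules_eq_prod {.inr 0, .inr 1} (by decide),
      exists_ncard_invtSubmodules_eq_prod {.inl 0, .inl 0, .inl 0, .inl 0} (by decide),
      exists_ncard_invtSubmodules_eq_prod {.inl 0, .inl 0, .inr 0} (by decide),
      exists_ncard_invtSubmodules_eq_prod {.inl 0, .inl 0, .inl 0, .inl 1} (by decide),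
      exists_ncard_invtSubmodules_eq_prod {.inl 0, .inl 0, .inl 1, .inl 1} (by decide),
      exists_ncard_invtSubmodules_eq_prod {.inl 0, .inl 0, .inl 1, .inl 2} (by decide),
      exists_ncard_invtSubmodules_eq_prod {.inl 0, .inl 1, .inl 2, .inl 3} (by decide)]
end

section
/- Let T be a linear operator on ℝ^n such that ℝ^n has only finitely many T-invariant subspaces. Then the characteristic polynomial of T equals its minimal polynomial. -/
/-!
The cyclic subspaces `span {v, T v, T² v, …}` are `T`-invariant and cover `ℝⁿ`. If there are only
finitely many of them, then, since a vector space over an infinite field is not a finite union of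
proper subspaces, one of them is all of `ℝⁿ`. A cyclic subspace is spanned by the first
`deg (minpoly T)` iterates, so `n = deg (charpoly T) ≤ deg (minpoly T)`; as the minimal polynomial
divides the characteristic polynomial and both are monic, they coincide.
-/

open Polynomial

namespace Module.End

section Semiring

variable {R V : Type*} [Semiring R] [AddCommMonoid V] [Module R V]

def cyclicSubspace (f : End R V) (v : V) : Submodule R V :=
  Submodule.span R (Set.range fun k : ℕ => (f ^ k) v)

variable (f : End R V) (v : V)

theorem pow_apply_mem_cyclicSubspace (k : ℕ) : (f ^ k) v ∈ f.cyclicSubspace v :=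
  Submodule.subset_span ⟨k, rfl⟩

theorem mem_cyclicSubspace_self : v ∈ f.cyclicSubspace v := by
  simpa using f.pow_apply_mem_cyclicSubspace v 0

theorem cyclicSubspace_mem_invtSubmodule : f.cyclicSubspace v ∈ f.invtSubmodule := by
  rw [mem_invtSubmodule_iff_map_le, cyclicSubspace, Submodule.map_span, Submodule.span_le]
  rintro _ ⟨_, ⟨k, rfl⟩, rfl⟩
  exact Submodule.subset_span ⟨k + 1, by simp [pow_succ']⟩

end Semiring

theorem exists_cyclicSubspace_eq_top {K V : Type*} [DivisionRing K] [Infinite K] [AddCommGroup V]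
    [Module K V] (f : End K V)
    (hfin : (f.invtSubmodule : Set (Submodule K V)).Finite) :
    ∃ v, f.cyclicSubspace v = ⊤ := by
  have hrange : (Set.range f.cyclicSubspace).Finite :=
    hfin.subset (Set.range_subset_iff.2 f.cyclicSubspace_mem_invtSubmodule)
  have := hrange.to_subtype
  obtain ⟨⟨_, v, rfl⟩, hv⟩ := Subspace.exists_eq_top_of_iUnion_eq_univ
    (p := ((↑) : Set.range f.cyclicSubspace → Submodule K V))
    (Set.eq_univ_of_forall fun x => Set.mem_iUnion.2 ⟨⟨_, x, rfl⟩, f.mem_cyclicSubspace_self x⟩)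
  exact ⟨v, hv⟩

section CommRing

variable {R V : Type*} [CommRing R] [AddCommGroup V] [Module R V] (f : End R V) (v : V)

theorem aeval_apply_mem_span_pow_of_natDegree_lt {p : R[X]} {d : ℕ} (hp : p.natDegree < d) :
    aeval f p v ∈ Submodule.span R (Set.range fun i : Fin d => (f ^ (i : ℕ)) v) := by
  rw [aeval_eq_sum_range' hp, LinearMap.sum_apply]
  refine Submodule.sum_mem _ fun i hi => Submodule.smul_mem _ _ (Submodule.subset_span ?_)
  exact ⟨⟨i, Finset.mem_range.1 hi⟩, rfl⟩

theorem cyclicSubspace_le_span_pow_lt_natDegree_minpoly [Nontrivial R] (hf : IsIntegral R f) :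
    f.cyclicSubspace v ≤
      Submodule.span R (Set.range fun i : Fin (minpoly R f).natDegree => (f ^ (i : ℕ)) v) := by
  rw [cyclicSubspace, Submodule.span_le]
  rintro _ ⟨k, rfl⟩
  have hmod : aeval f (X ^ k %ₘ minpoly R f) = f ^ k := by
    rw [aeval_modByMonic_eq_self_of_root (minpoly.aeval R f), aeval_X_pow]
  change (f ^ k) v ∈ _
  rw [← hmod]
  rcases eq_or_ne (X ^ k %ₘ minpoly R f) 0 with h0 | h0
  · simp [h0]
  · exact f.aeval_apply_mem_span_pow_of_natDegree_lt v
      (natDegree_lt_natDegree h0 (degree_modByMonic_lt _ (minpoly.monic hf)))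

end CommRing

section Field

variable {K V : Type*} [Field K] [AddCommGroup V] [Module K V] [FiniteDimensional K V]

theorem finrank_cyclicSubspace_le (f : End K V) (v : V) :
    Module.finrank K (f.cyclicSubspace v) ≤ (minpoly K f).natDegree :=
  calc Module.finrank K (f.cyclicSubspace v)
      _ ≤ (Set.range fun i : Fin (minpoly K f).natDegree => (f ^ (i : ℕ)) v).finrank K :=
        Submodule.finrank_mono
          (f.cyclicSubspace_le_span_pow_lt_natDegree_minpoly v (LinearMap.isIntegral f))
      _ ≤ (minpoly K f).natDegree := (finrank_range_le_card _).trans (Fintype.card_fin _).le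

theorem charpoly_eq_minpoly_of_cyclicSubspace_eq_top {f : End K V} {v : V}
    (hv : f.cyclicSubspace v = ⊤) : f.charpoly = minpoly K f := by
  refine eq_of_monic_of_dvd_of_natDegree_le (minpoly.monic (LinearMap.isIntegral f))
    f.charpoly_monic f.minpoly_dvd_charpoly ?_
  rw [LinearMap.charpoly_natDegree, ← finrank_top K V, ← hv]
  exact f.finrank_cyclicSubspace_le v

end Field

end Module.End

theorem stmt_18 (n : ℕ) (T : Module.End ℝ (Fin n → ℝ))
    (hfin : {W : Submodule ℝ (Fin n → ℝ) | ∀ x ∈ W, T x ∈ W}.Finite) :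
    LinearMap.charpoly T = minpoly ℝ T := by
  obtain ⟨v, hv⟩ := T.exists_cyclicSubspace_eq_top hfin
  exact Module.End.charpoly_eq_minpoly_of_cyclicSubspace_eq_top hv
end
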